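/- Assume W > 0, 4I > zW, and r = 2k+1 is odd. Then over all pairs (a,b) with a, b ∈ {−r/2, −r/2+1, …, r/2}, the function φ(a,b) = (W/4)(a+b)² − (W/4 − I/z)(a² + b²) attains its minimum exactly at the two pairs (−1/2, 1/2) and (1/2, −1/2). -/

import Mathlib

/-!
Write `φ(a,b) - φ(-1/2, 1/2) = (W/4)(a+b)² + (I/z - W/4)((a² - 1/4) + (b² - 1/4))`.
Both coefficients are positive, and for odd `r` every point of the charge set is a
half-integer `m + 1/2`, whose square exceeds `1/4` by `m(m+1) ≥ 0`. So the difference is a sum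
of three nonnegative terms, vanishing exactly when `a + b = 0` and `a² = b² = 1/4`.
-/

open Finset

/-- The nearest-neighbour bond potential
`φ(a,b) = (W/4)(a+b)² − (W/4 − I/z)(a² + b²)`. -/
noncomputable def phi (z : ℕ) (I W : ℝ) (a b : ℝ) : ℝ :=
  W / 4 * (a + b) ^ 2 - (W / 4 - I / z) * (a ^ 2 + b ^ 2)

/-- The finite set `{j − r/2 : j = 0, 1, …, r}` of possible values of `Q_x = n_x − r/2`. -/
noncomputable def chargeSet (r : ℕ) : Finset ℝ :=
  (Finset.range (r + 1)).image (fun (j : ℕ) => (j : ℝ) - r / 2)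

lemma mem_chargeSet_iff {r : ℕ} {x : ℝ} :
    x ∈ chargeSet r ↔ ∃ j ≤ r, (j : ℝ) - r / 2 = x := by
  simp [chargeSet]

lemma exists_int_add_half_of_mem_chargeSet {k : ℕ} {x : ℝ} (hx : x ∈ chargeSet (2 * k + 1)) :
    ∃ m : ℤ, x = m + 1 / 2 := by
  obtain ⟨j, -, rfl⟩ := mem_chargeSet_iff.mp hx
  exact ⟨(j : ℤ) - k - 1, by push_cast; ring⟩

lemma half_mem_chargeSet (k : ℕ) : (1 / 2 : ℝ) ∈ chargeSet (2 * k + 1) :=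
  mem_chargeSet_iff.mpr ⟨k + 1, by omega, by push_cast; ring⟩

lemma neg_half_mem_chargeSet (k : ℕ) : (-(1 / 2) : ℝ) ∈ chargeSet (2 * k + 1) :=
  mem_chargeSet_iff.mpr ⟨k, by omega, by push_cast; ring⟩

lemma one_quarter_le_sq_int_add_half (m : ℤ) : 1 / 4 ≤ ((m : ℝ) + 1 / 2) ^ 2 := by
  have hm : (0 : ℝ) ≤ m * (m + 1) := by
    have : (0 : ℤ) ≤ m * (m + 1) := by
      rcases le_or_gt 0 m with h | h <;> nlinarith
    exact_mod_cast this
  nlinarith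

lemma one_quarter_le_sq_of_mem_chargeSet {k : ℕ} {x : ℝ} (hx : x ∈ chargeSet (2 * k + 1)) :
    1 / 4 ≤ x ^ 2 := by
  obtain ⟨m, rfl⟩ := exists_int_add_half_of_mem_chargeSet hx
  exact one_quarter_le_sq_int_add_half m

lemma phi_sub_phi_neg_half_half (z : ℕ) (I W a b : ℝ) :
    phi z I W a b - phi z I W (-(1 / 2)) (1 / 2) =
      W / 4 * (a + b) ^ 2 + (I / z - W / 4) * ((a ^ 2 - 1 / 4) + (b ^ 2 - 1 / 4)) := by
  unfold phi
  ring

section Potential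

variable {z : ℕ} {I W a b : ℝ}

lemma phi_neg_half_half_le (hW : 0 ≤ W) (hIW : W / 4 < I / z)
    (ha : 1 / 4 ≤ a ^ 2) (hb : 1 / 4 ≤ b ^ 2) :
    phi z I W (-(1 / 2)) (1 / 2) ≤ phi z I W a b := by
  rw [← sub_nonneg, phi_sub_phi_neg_half_half]
  have hc : 0 < I / z - W / 4 := sub_pos.mpr hIW
  positivity [sub_nonneg.mpr ha, sub_nonneg.mpr hb]

lemma phi_eq_phi_neg_half_half_iff (hW : 0 < W) (hIW : W / 4 < I / z)
    (ha : 1 / 4 ≤ a ^ 2) (hb : 1 / 4 ≤ b ^ 2) :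
    phi z I W a b = phi z I W (-(1 / 2)) (1 / 2) ↔
      (a = -(1 / 2) ∧ b = 1 / 2) ∨ (a = 1 / 2 ∧ b = -(1 / 2)) := by
  have hc : 0 < I / z - W / 4 := sub_pos.mpr hIW
  have ha' : 0 ≤ a ^ 2 - 1 / 4 := sub_nonneg.mpr ha
  have hb' : 0 ≤ b ^ 2 - 1 / 4 := sub_nonneg.mpr hb
  rw [← sub_eq_zero, phi_sub_phi_neg_half_half,
    add_eq_zero_iff_of_nonneg (by positivity) (by positivity),
    mul_eq_zero, mul_eq_zero, add_eq_zero_iff_of_nonneg ha' hb']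
  simp only [hW.ne', hc.ne', div_eq_zero_iff, four_ne_zero, or_false, false_or,
    pow_eq_zero_iff two_ne_zero, sub_eq_zero]
  constructor
  · rintro ⟨hab, ha2, -⟩
    have hba : b = -a := by linarith
    rcases sq_eq_sq_iff_eq_or_eq_neg.mp (ha2.trans (by norm_num : (1 / 4 : ℝ) = (1 / 2) ^ 2))
      with rfl | rfl
    · exact Or.inr ⟨rfl, hba⟩
    · exact Or.inl ⟨rfl, by rw [hba, neg_neg]⟩
  · rintro (⟨rfl, rfl⟩ | ⟨rfl, rfl⟩) <;> norm_num

end Potential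

theorem statement2_general (r z k : ℕ) (hz : 2 ≤ z) (I W : ℝ)
    (hW : 0 < W) (hIW : (z : ℝ) * W < 4 * I) (hrk : r = 2 * k + 1) :
    (-(1 / 2) : ℝ) ∈ chargeSet r ∧ ((1 / 2 : ℝ)) ∈ chargeSet r ∧
    ∀ a ∈ chargeSet r, ∀ b ∈ chargeSet r,
      phi z I W (-(1 / 2)) (1 / 2) ≤ phi z I W a b ∧
      (phi z I W a b = phi z I W (-(1 / 2)) (1 / 2) ↔
        (a = -(1 / 2) ∧ b = 1 / 2) ∨ (a = 1 / 2 ∧ b = -(1 / 2))) := by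
  subst hrk
  have hz0 : (0 : ℝ) < z := Nat.cast_pos.mpr (by omega)
  have hc : W / 4 < I / z := by
    rw [div_lt_div_iff₀ four_pos hz0]
    linarith
  refine ⟨neg_half_mem_chargeSet k, half_mem_chargeSet k, fun a ha b hb => ?_⟩
  have ha' := one_quarter_le_sq_of_mem_chargeSet ha
  have hb' := one_quarter_le_sq_of_mem_chargeSet hb
  exact ⟨phi_neg_half_half_le hW.le hc ha' hb', phi_eq_phi_neg_half_half_iff hW hc ha' hb'⟩

/-- For `W > 0`, `4I > zW` and odd `r = 2k+1`, the minimum of `φ` over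
`chargeSet r × chargeSet r` is attained exactly at `(−1/2, 1/2)` and `(1/2, −1/2)`. -/
theorem statement2 (r z k : ℕ) (hr : 2 ≤ r) (hz : 2 ≤ z) (I W : ℝ)
    (hW : 0 < W) (hIW : (z : ℝ) * W < 4 * I) (hrk : r = 2 * k + 1) :
    (-(1 / 2) : ℝ) ∈ chargeSet r ∧ ((1 / 2 : ℝ)) ∈ chargeSet r ∧
    ∀ a ∈ chargeSet r, ∀ b ∈ chargeSet r,
      phi z I W (-(1 / 2)) (1 / 2) ≤ phi z I W a b ∧
      (phi z I W a b = phi z I W (-(1 / 2)) (1 / 2) ↔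
        (a = -(1 / 2) ∧ b = 1 / 2) ∨ (a = 1 / 2 ∧ b = -(1 / 2))) :=
  statement2_general r z k hz I W hW hIW hrk
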